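/- Let F be a weakly viable consular election rule satisfying SPP and SPO. Then the range graph 𝒢(F) has diameter at most 2: for any two distinct alternatives a, b ∈ A, either {a,b} is an edge of 𝒢(F), or there exists c ∈ A such that both {a,c} and {c,b} are edges of 𝒢(F). -/

import Mathlib

open Function

/-- A ballot is a strict linear order on the set of alternatives. -/
abbrev Ballot (A : Type*) := LinearOrder A

/-- A profile assigns a ballot to each voter. -/
abbrev Profile (V A : Type*) := V → Ballot A

variable {V A : Type*}

/-- The best (greatest) element of `W` under ballot `L` (junk value if `W` is empty). -/
noncomputable def bestIn [Nonempty A] (L : Ballot A) (W : Finset A) : A :=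
  if h : W.Nonempty then @Finset.max' A L W h else Classical.arbitrary A

/-- The worst (least) element of `W` under ballot `L` (junk value if `W` is empty). -/
noncomputable def worstIn [Nonempty A] (L : Ballot A) (W : Finset A) : A :=
  if h : W.Nonempty then @Finset.min' A L W h else Classical.arbitrary A

/-- Strategy-proofness for optimists. -/
def SPO [DecidableEq V] [Nonempty A] (F : Profile V A → Finset A) : Prop :=
  ∀ (P : Profile V A) (i : V) (Pi' : Ballot A),
    (P i).le (bestIn (P i) (F (Function.update P i Pi'))) (bestIn (P i) (F P))

/-- Strategy-proofness for pessimists. -/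
def SPP [DecidableEq V] [Nonempty A] (F : Profile V A → Finset A) : Prop :=
  ∀ (P : Profile V A) (i : V) (Pi' : Ballot A),
    (P i).le (worstIn (P i) (F (Function.update P i Pi'))) (worstIn (P i) (F P))

/-- `F` is weakly viable if every alternative is on some winning committee. -/
def WeaklyViable (F : Profile V A → Finset A) : Prop :=
  ∀ a : A, ∃ P : Profile V A, a ∈ F P

/-- `F` is Marian if some alternative is on every winning committee. -/
def Marian (F : Profile V A → Finset A) : Prop :=
  ∃ m : A, ∀ P : Profile V A, m ∈ F P

/-- restriction of a ballot to a subset of alternatives -/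
def restrictBallot (L : Ballot A) (B : Finset A) : Ballot {x // x ∈ B} :=
  @LinearOrder.lift' _ A L (fun x => (x : A)) Subtype.val_injective

/-- A consular rule is reducible if it is the disjoint union of two social choice functions. -/
def Reducible [Fintype A] [DecidableEq A] (F : Profile V A → Finset A) : Prop :=
  ∃ B C : Finset A, B.Nonempty ∧ C.Nonempty ∧ Disjoint B C ∧ B ∪ C = Finset.univ ∧
    ∃ (G : Profile V {x // x ∈ B} → {x // x ∈ B}) (H : Profile V {x // x ∈ C} → {x // x ∈ C}),
      ∀ P : Profile V A,
        F P = {((G (fun i => restrictBallot (P i) B)) : A), ((H (fun i => restrictBallot (P i) C)) : A)}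

/-- The range graph of a consular election rule. -/
def rangeGraph [DecidableEq A] (F : Profile V A → Finset A) : SimpleGraph A where
  Adj a b := a ≠ b ∧ ∃ P : Profile V A, F P = {a, b}
  symm := by
    constructor
    rintro a b ⟨hab, P, hP⟩
    exact ⟨hab.symm, P, by rwa [Finset.pair_comm]⟩
  loopless := by constructor; rintro a ⟨h, -⟩; exact h rfl

/-- `t` is ranked immediately above `s` in ballot `L`. -/
def JustAbove (L : Ballot A) (s t : A) : Prop :=
  L.lt s t ∧ ∀ z, ¬ (L.lt s z ∧ L.lt z t)

/-- The ballot obtained from `L` by transposing the alternatives `s` and `t`. -/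
def swapBallot [DecidableEq A] (L : Ballot A) (s t : A) : Ballot A :=
  @LinearOrder.lift' A A L (Equiv.swap s t) (Equiv.injective _)

/-- `L'` is obtained from `L` by moving `s` up. -/
def MovedUp (L L' : Ballot A) (s : A) : Prop :=
  (∀ x y, x ≠ s → y ≠ s → (L'.lt x y ↔ L.lt x y)) ∧ ∀ x, L.lt x s → L'.lt x s

/-- `L'` is obtained from `L` by moving `s` down. -/
def MovedDown (L L' : Ballot A) (s : A) : Prop :=
  (∀ x y, x ≠ s → y ≠ s → (L'.lt x y ↔ L.lt x y)) ∧ ∀ x, L.lt s x → L'.lt s x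

/-- Strategy-proofness of a single-winner social choice function. -/
def SCFStrategyProof {B : Type*} [DecidableEq V] (G : Profile V B → B) : Prop :=
  ∀ (Q : Profile V B) (i : V) (Qi' : Ballot B),
    (Q i).le (G (Function.update Q i Qi')) (G Q)

/-- Edge-connectivity of a graph. -/
def EdgeConnectivity {X : Type*} (G : SimpleGraph X) : Prop :=
  ∀ a b c d : X, G.Adj a b → G.Adj c d → a ≠ c → a ≠ d → b ≠ c → b ≠ d →
    (G.Adj a c ∨ G.Adj a d) ∧ (G.Adj b c ∨ G.Adj b d)

section Helpers

variable {V A : Type*}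

lemma ballot_le_trans (L : Ballot A) {x y z : A} (h1 : L.le x y) (h2 : L.le y z) :
    L.le x z := by letI := L; exact le_trans h1 h2

lemma bestIn_mem [Nonempty A] (L : Ballot A) {W : Finset A} (h : W.Nonempty) :
    bestIn L W ∈ W := by rw [bestIn, dif_pos h]; exact @Finset.max'_mem A L W h

lemma le_bestIn [Nonempty A] (L : Ballot A) {W : Finset A} {x : A} (hx : x ∈ W) :
    L.le x (bestIn L W) := by
  rw [bestIn, dif_pos ⟨x, hx⟩]; exact @Finset.le_max' A L W x hx

lemma worstIn_mem [Nonempty A] (L : Ballot A) {W : Finset A} (h : W.Nonempty) :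
    worstIn L W ∈ W := by rw [worstIn, dif_pos h]; exact @Finset.min'_mem A L W h

lemma worstIn_le [Nonempty A] (L : Ballot A) {W : Finset A} {x : A} (hx : x ∈ W) :
    L.le (worstIn L W) x := by
  rw [worstIn, dif_pos ⟨x, hx⟩]; exact @Finset.min'_le A L W x hx

lemma two_mem_eq [DecidableEq A] {S : Finset A} {a b : A} (hc : S.card = 2)
    (ha : a ∈ S) (hb : b ∈ S) (hab : a ≠ b) : S = {a, b} := by
  refine (Finset.eq_of_subset_of_card_le ?_ ?_).symm
  · exact Finset.insert_subset ha (Finset.singleton_subset_iff.mpr hb)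
  · rw [hc, Finset.card_pair hab]

lemma pair_of [DecidableEq A] {S : Finset A} {a : A} (hc : S.card = 2) (ha : a ∈ S) :
    ∃ s, s ≠ a ∧ S = {a, s} := by
  obtain ⟨x, y, hxy, rfl⟩ := Finset.card_eq_two.mp hc
  rcases Finset.mem_insert.mp ha with rfl | h
  · exact ⟨y, hxy.symm, rfl⟩
  · obtain rfl := Finset.mem_singleton.mp h
    exact ⟨x, hxy, Finset.pair_comm x a⟩

lemma spo_back [DecidableEq V] [Nonempty A] {F : Profile V A → Finset A} (hSPO : SPO F)
    (R : Profile V A) (j : V) (L2 : Ballot A) :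
    L2.le (bestIn L2 (F R)) (bestIn L2 (F (Function.update R j L2))) := by
  have h := hSPO (Function.update R j L2) j (R j)
  simp only [Function.update_idem, Function.update_eq_self, Function.update_self] at h
  rwa [Function.update_self] at h

lemma spp_back [DecidableEq V] [Nonempty A] {F : Profile V A → Finset A} (hSPP : SPP F)
    (R : Profile V A) (j : V) (L2 : Ballot A) :
    L2.le (worstIn L2 (F R)) (worstIn L2 (F (Function.update R j L2))) := by
  have h := hSPP (Function.update R j L2) j (R j)
  simp only [Function.update_idem, Function.update_eq_self, Function.update_self] at h
  rwa [Function.update_self] at h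

/-- If `w` is in every outcome-relevant sense top of `L`, then after any single voter
switches to `L`, a winner `w` stays a winner. -/
lemma keep_top [DecidableEq V] [Nonempty A] {F : Profile V A → Finset A}
    (hne : ∀ P, (F P).Nonempty) (hSPO : SPO F) {L : Ballot A} {w : A}
    (htop : ∀ x, L.le x w) (hanti : ∀ x y, L.le x y → L.le y x → x = y)
    {P : Profile V A} (hw : w ∈ F P) (j : V) : w ∈ F (Function.update P j L) := by
  have h := spo_back hSPO P j L
  have h2 : L.le w (bestIn L (F (Function.update P j L))) :=
    ballot_le_trans L (le_bestIn L hw) h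
  have h3 : w = bestIn L (F (Function.update P j L)) :=
    hanti _ _ h2 (htop _)
  rw [h3]; exact bestIn_mem L (hne _)

lemma keep_top_all [DecidableEq V] [Nonempty A] {F : Profile V A → Finset A}
    (hne : ∀ P, (F P).Nonempty) (hSPO : SPO F) {L : Ballot A} {w : A}
    (htop : ∀ x, L.le x w) (hanti : ∀ x y, L.le x y → L.le y x → x = y)
    {P : Profile V A} (hw : w ∈ F P) (s : Finset V) :
    w ∈ F (fun i => if i ∈ s then L else P i) := by
  classical
  induction s using Finset.induction_on with
  | empty => simpa using hw
  | @insert j s hj ih =>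
    have heq : (fun i => if i ∈ insert j s then L else P i)
        = Function.update (fun i => if i ∈ s then L else P i) j L := by
      funext i
      by_cases h : i = j <;> simp [Function.update_apply, h]
    rw [heq]
    exact keep_top hne hSPO htop hanti ih j

end Helpers

/-- the range graph of a weakly viable consular election rule satisfying
SPP and SPO has diameter at most 2. -/
theorem statement_16 {V A : Type*} [Fintype V] [Nonempty V] [DecidableEq V] [Fintype A] [DecidableEq A] [Nonempty A]
    (F : Profile V A → Finset A) (hcomm : ∀ P, (F P).card = 2)
    (hviable : WeaklyViable F) (hSPP : SPP F) (hSPO : SPO F) :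
    ∀ a b : A, a ≠ b →
      (rangeGraph F).Adj a b ∨
      ∃ c : A, (rangeGraph F).Adj a c ∧ (rangeGraph F).Adj c b := by
  intro a b hab
  have hne : ∀ P : Profile V A, (F P).Nonempty := fun P =>
    Finset.card_pos.mp (by rw [hcomm P]; norm_num)
  -- encode alternatives into ℕ
  set f0 : A → ℕ := fun x => ((Fintype.equivFin A) x : ℕ) with hf0
  have hinj0 : Function.Injective f0 := fun x y h =>
    (Fintype.equivFin A).injective (Fin.val_injective h)
  set f1 : A → ℕ := fun x => if x = a then 0 else if x = b then 1 else f0 x + 2 with hf1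
  set f2 : A → ℕ := fun x => if x = b then 0 else if x = a then 1 else f0 x + 2 with hf2
  have hinj1 : Function.Injective f1 := by
    intro x y h
    simp only [hf1] at h
    split_ifs at h with h1 h2 h3 h4 h5 h6 h7 <;>
      first
        | (subst_vars; rfl)
        | omega
        | exact hinj0 (by omega)
  have hinj2 : Function.Injective f2 := by
    intro x y h
    simp only [hf2] at h
    split_ifs at h with h1 h2 h3 h4 h5 h6 h7 <;>
      first
        | (subst_vars; rfl)
        | omega
        | exact hinj0 (by omega)
  set L1 : Ballot A := LinearOrder.lift' (fun x => OrderDual.toDual (f1 x))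
    (fun x y h => hinj1 (OrderDual.toDual.injective h)) with hL1
  set L2 : Ballot A := LinearOrder.lift' (fun x => OrderDual.toDual (f2 x))
    (fun x y h => hinj2 (OrderDual.toDual.injective h)) with hL2
  have hle1 : ∀ x y, L1.le x y ↔ f1 y ≤ f1 x := fun x y => Iff.rfl
  have hle2 : ∀ x y, L2.le x y ↔ f2 y ≤ f2 x := fun x y => Iff.rfl
  have hanti1 : ∀ x y, L1.le x y → L1.le y x → x = y := fun x y h1 h2 =>
    hinj1 (Nat.le_antisymm ((hle1 y x).mp h2) ((hle1 x y).mp h1))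
  have hanti2 : ∀ x y, L2.le x y → L2.le y x → x = y := fun x y h1 h2 =>
    hinj2 (Nat.le_antisymm ((hle2 y x).mp h2) ((hle2 x y).mp h1))
  have htop1 : ∀ x, L1.le x a := by
    intro x; rw [hle1]; simp [hf1]
  have htop2 : ∀ x, L2.le x b := by
    intro x; rw [hle2]; simp [hf2]
  have hsec1 : ∀ x, x ≠ a → L1.le x b := by
    intro x hx; rw [hle1]; simp only [hf1]
    split_ifs <;> omega
  have hsec2 : ∀ x, x ≠ b → L2.le x a := by
    intro x hx; rw [hle2]; simp only [hf2]
    split_ifs <;> omega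
  have hagree : ∀ x y, x ≠ a → x ≠ b → y ≠ a → y ≠ b → (L2.le x y → L1.le x y) := by
    intro x y hxa hxb hya hyb h
    rw [hle2] at h; rw [hle1]
    simp only [hf1, hf2, if_neg hxa, if_neg hxb, if_neg hya, if_neg hyb] at *
    exact h
  -- a winning profile for a, and one for b
  obtain ⟨Pa, hPa⟩ := hviable a
  obtain ⟨Pb, hPb⟩ := hviable b
  have ha1 : a ∈ F (fun _ => L1) := by
    have h := keep_top_all (L := L1) (w := a) hne hSPO htop1 hanti1 hPa Finset.univ
    simpa using h
  have hb2 : b ∈ F (fun _ => L2) := by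
    have h := keep_top_all (L := L2) (w := b) hne hSPO htop2 hanti2 hPb Finset.univ
    simpa using h
  -- the walk from the all-L1 profile to the all-L2 profile
  set G : Prop := (rangeGraph F).Adj a b ∨
      ∃ c : A, (rangeGraph F).Adj a c ∧ (rangeGraph F).Adj c b with hG
  have walk : ∀ s : Finset V, G ∨ a ∈ F (fun i => if i ∈ s then L2 else L1) := by
    intro s
    induction s using Finset.induction_on with
    | empty => right; simpa using ha1
    | @insert j s hj ih =>
      rcases ih with hGdone | haS
      · exact Or.inl hGdone
      set R : Profile V A := fun i => if i ∈ s then L2 else L1 with hR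
      set R' : Profile V A := Function.update R j L2 with hR'
      have hRj : R j = L1 := by simp [hR, hj]
      have hR'eq : R' = fun i => if i ∈ insert j s then L2 else L1 := by
        funext i
        by_cases h : i = j <;> simp [hR', hR, Function.update_apply, h]
      by_cases hbS : b ∈ F R
      · exact Or.inl (Or.inl ⟨hab, R, two_mem_eq (hcomm R) haS hbS hab⟩)
      -- key inequalities
      have i3 : L2.le (bestIn L2 (F R)) (bestIn L2 (F R')) := spo_back hSPO R j L2
      have i4 : L2.le (worstIn L2 (F R)) (worstIn L2 (F R')) := spp_back hSPP R j L2
      have i2 : L1.le (worstIn L1 (F R')) (worstIn L1 (F R)) := by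
        have h := hSPP R j L2
        rwa [hRj] at h
      -- a ∈ F R' or b ∈ F R'
      have hbest : L2.le a (bestIn L2 (F R')) :=
        ballot_le_trans L2 (le_bestIn L2 haS) i3
      have hbmem : bestIn L2 (F R') ∈ F R' := bestIn_mem L2 (hne R')
      by_cases haT : a ∈ F R'
      · by_cases hbT : b ∈ F R'
        · exact Or.inl (Or.inl ⟨hab, R', two_mem_eq (hcomm R') haT hbT hab⟩)
        · right; rw [← hR'eq]; exact haT
      · -- then b ∈ F R' : the crossing step
        have hbT : b ∈ F R' := by
          by_cases h : bestIn L2 (F R') = b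
          · rw [← h]; exact hbmem
          · exfalso
            have : bestIn L2 (F R') = a := hanti2 _ _ (hsec2 _ h) hbest
            exact haT (this ▸ hbmem)
        obtain ⟨s', hs'a, hS⟩ := pair_of (hcomm R) haS
        obtain ⟨t', ht'b, hT⟩ := pair_of (hcomm R') hbT
        have hs'S : s' ∈ F R := by rw [hS]; simp
        have ht'T : t' ∈ F R' := by rw [hT]; simp
        have haS' : a ∈ F R := haS
        have hbT' : b ∈ F R' := hbT
        have hs'b : s' ≠ b := fun h => hbS (h ▸ hs'S)
        have ht'a : t' ≠ a := fun h => haT (h ▸ ht'T)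
        -- worstIn computations
        have w1S : worstIn L1 (F R) = s' := by
          have hm : worstIn L1 (F R) ∈ ({a, s'} : Finset A) := by
            rw [← hS]; exact worstIn_mem L1 (hne R)
          rcases Finset.mem_insert.mp hm with h | h
          · exfalso
            have hle : L1.le a s' := by rw [← h]; exact worstIn_le L1 hs'S
            exact hs'a (hanti1 _ _ (htop1 s') hle)
          · exact Finset.mem_singleton.mp h
        have w2S : worstIn L2 (F R) = s' := by
          have hm : worstIn L2 (F R) ∈ ({a, s'} : Finset A) := by
            rw [← hS]; exact worstIn_mem L2 (hne R)
          rcases Finset.mem_insert.mp hm with h | h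
          · exfalso
            have hle : L2.le a s' := by rw [← h]; exact worstIn_le L2 hs'S
            exact hs'a (hanti2 _ _ (hsec2 s' hs'b) hle)
          · exact Finset.mem_singleton.mp h
        have w1T : worstIn L1 (F R') = t' := by
          have hm : worstIn L1 (F R') ∈ ({b, t'} : Finset A) := by
            rw [← hT]; exact worstIn_mem L1 (hne R')
          rcases Finset.mem_insert.mp hm with h | h
          · exfalso
            have hle : L1.le b t' := by rw [← h]; exact worstIn_le L1 ht'T
            exact ht'b (hanti1 _ _ (hsec1 t' ht'a) hle)
          · exact Finset.mem_singleton.mp h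
        have w2T : worstIn L2 (F R') = t' := by
          have hm : worstIn L2 (F R') ∈ ({b, t'} : Finset A) := by
            rw [← hT]; exact worstIn_mem L2 (hne R')
          rcases Finset.mem_insert.mp hm with h | h
          · exfalso
            have hle : L2.le b t' := by rw [← h]; exact worstIn_le L2 ht'T
            exact ht'b (hanti2 _ _ (htop2 t') hle)
          · exact Finset.mem_singleton.mp h
        rw [w1T, w1S] at i2   -- L1.le t' s'
        rw [w2S, w2T] at i4   -- L2.le s' t'
        have hst : s' = t' := hanti1 _ _ (hagree _ _ hs'a hs'b ht'a ht'b i4) i2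
        left; right
        refine ⟨s', ⟨fun h => hs'a h.symm, R, hS⟩, ⟨hs'b, R', ?_⟩⟩
        rw [hT, ← hst, Finset.pair_comm]
  rcases walk Finset.univ with hGdone | haQ
  · exact hGdone
  · have haQ' : a ∈ F (fun _ => L2) := by simpa using haQ
    exact Or.inl ⟨hab, (fun _ => L2), two_mem_eq (hcomm _) haQ' hb2 hab⟩
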